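/- Let (V,B) be a Steiner triple system of order v = 6s+1 or 6s+3 (s ≥ 1), let (Q,·) be the associated Steiner quasigroup (x·x = x, and x·y = z when {x,y,z} ∈ B), and apply the Bose construction on Q × Z_3. Fix a ∈ V and remove the triple {(a,0),(a,1),(a,2)} together with all triples containing any of (a,0),(a,1),(a,2). The resulting structure on the remaining 3(v-1) points is a pentagonal geometry PENT(3, r) with r = (3v-1)/2 - 3, i.e. r = 9s-2 if v ≡ 1 (mod 6) and r = 9s+1 if v ≡ 3 (mod 6); its opposite line pairs are exactly the pairs {(z,0),(z,1),(z,2)}, {(w,0),(w,1),(w,2)} for {a,z,w} ∈ B. -/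

import Mathlib

open scoped Classical

/-- The family of triples of the Bose construction on `Q × ZMod 3`. -/
def BoseTriples {Q : Type} [DecidableEq Q] (mul : Q → Q → Q) (t : Finset (Q × ZMod 3)) : Prop :=
  (∃ x : Q, t = {(x, 0), (x, 1), (x, 2)}) ∨
  (∃ (x y : Q) (i : ZMod 3), x ≠ y ∧ t = {(x, i), (y, i), (mul x y, i + 1)})

/-- The opposite line of `x` relative to a family of lines `L` on a point set `W`. -/
noncomputable def oppLineIn {V : Type} [Fintype V] [DecidableEq V]
    (L : Finset (Finset V)) (W : Finset V) (x : V) : Finset V :=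
  W.filter (fun y => y ≠ x ∧ ∀ l ∈ L, ¬(x ∈ l ∧ y ∈ l))

/-- A pentagonal geometry PENT(k,r) with line family `L` on the point set `W`. -/
def IsPentOn {V : Type} [Fintype V] [DecidableEq V]
    (W : Finset V) (k r : ℕ) (L : Finset (Finset V)) : Prop :=
  (∀ l ∈ L, l ⊆ W ∧ l.card = k) ∧
  (∀ x y : V, x ∈ W → y ∈ W → x ≠ y → (L.filter (fun l => x ∈ l ∧ y ∈ l)).card ≤ 1) ∧
  (∀ x ∈ W, (L.filter (fun l => x ∈ l)).card = r) ∧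
  (∀ x ∈ W, oppLineIn L W x ∈ L)

/-- The lines `l`, `m` form an opposite line pair of the family `L` on point set `W`. -/
def OppPairIn {V : Type} [Fintype V] [DecidableEq V]
    (L : Finset (Finset V)) (W : Finset V) (l m : Finset V) : Prop :=
  l ∈ L ∧ m ∈ L ∧ l ≠ m ∧
    (∀ x ∈ l, oppLineIn L W x = m) ∧ (∀ y ∈ m, oppLineIn L W y = l)

/-! The Steiner triple system makes `mul` a Steiner quasigroup (idempotent, commutative,
`x * (x * y) = y`), and in the Bose system the line through two points has an explicit third
point. After deleting the fibre over `a`, the point `(x, i)` is collinear with every remaining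
point except the three over `x * a`, so its opposite line is that fibre, and the opposite line
of a point over `x * a` is the fibre over `(x * a) * a = x`. Since the lines through `(x, i)`
partition the `3 (v - 1) - 1 - 3` points collinear with it into pairs, `2 r + 7 = 3 v`. -/

structure IsSteinerQuasigroup {Q : Type} (mul : Q → Q → Q) : Prop where
  mul_self : ∀ x, mul x x = x
  mul_comm : ∀ x y, mul x y = mul y x
  mul_mul_self_left : ∀ x y, mul x (mul x y) = y

namespace IsSteinerQuasigroup

variable {Q : Type} {mul : Q → Q → Q} (hq : IsSteinerQuasigroup mul)
include hq

theorem mul_ne_left {x y : Q} (hxy : x ≠ y) : mul x y ≠ x := fun h =>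
  hxy (by rw [← hq.mul_mul_self_left x y, h, hq.mul_self])

theorem mul_ne_right {x y : Q} (hxy : x ≠ y) : mul x y ≠ y :=
  hq.mul_comm x y ▸ hq.mul_ne_left hxy.symm

theorem mul_mul_self_right (x y : Q) : mul (mul x y) y = x := by
  rw [hq.mul_comm, hq.mul_comm x, hq.mul_mul_self_left]

end IsSteinerQuasigroup

section SteinerTripleSystem

variable {V : Type} [DecidableEq V] {B : Finset (Finset V)}

theorem ne_of_card_eq_three {x y z : V} (h : ({x, y, z} : Finset V).card = 3) :
    x ≠ y ∧ x ≠ z ∧ y ≠ z := by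
  refine ⟨?_, ?_, ?_⟩ <;> rintro rfl <;> simp at h <;>
    exact absurd h (Finset.card_le_two.trans_lt (by norm_num)).ne

theorem eq_of_mem_of_mem_of_sts
    (hSTS : ∀ x y : V, x ≠ y → (B.filter (fun t => x ∈ t ∧ y ∈ t)).card = 1)
    {t t' : Finset V} {x y : V} (hxy : x ≠ y) (ht : t ∈ B) (ht' : t' ∈ B)
    (hx : x ∈ t) (hy : y ∈ t) (hx' : x ∈ t') (hy' : y ∈ t') : t = t' :=
  Finset.card_le_one.mp (hSTS x y hxy).le t (by simp [ht, hx, hy]) t' (by simp [ht', hx', hy'])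

theorem eq_mul_of_mem_sts (hB3 : ∀ t ∈ B, t.card = 3)
    (hSTS : ∀ x y : V, x ≠ y → (B.filter (fun t => x ∈ t ∧ y ∈ t)).card = 1)
    {mul : V → V → V} (hmul : ∀ x y : V, x ≠ y → ({x, y, mul x y} : Finset V) ∈ B)
    {x y z : V} (hB : ({x, y, z} : Finset V) ∈ B) : z = mul x y := by
  obtain ⟨hxy, hxz, hyz⟩ := ne_of_card_eq_three (hB3 _ hB)
  have hblock := eq_of_mem_of_mem_of_sts hSTS hxy hB (hmul x y hxy)
    (by simp) (by simp) (by simp) (by simp)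
  have hz : z ∈ ({x, y, mul x y} : Finset V) := hblock ▸ by simp
  simpa [hxz.symm, hyz.symm] using hz

theorem isSteinerQuasigroup_of_sts (hB3 : ∀ t ∈ B, t.card = 3)
    (hSTS : ∀ x y : V, x ≠ y → (B.filter (fun t => x ∈ t ∧ y ∈ t)).card = 1)
    {mul : V → V → V} (hidem : ∀ x : V, mul x x = x)
    (hmul : ∀ x y : V, x ≠ y → ({x, y, mul x y} : Finset V) ∈ B) :
    IsSteinerQuasigroup mul where
  mul_self := hidem
  mul_comm x y := by
    rcases eq_or_ne x y with rfl | hxy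
    · rfl
    refine (eq_mul_of_mem_sts hB3 hSTS hmul ?_).symm
    rw [Finset.insert_comm]
    exact hmul y x hxy.symm
  mul_mul_self_left x y := by
    rcases eq_or_ne x y with rfl | hxy
    · rw [hidem, hidem]
    refine (eq_mul_of_mem_sts hB3 hSTS hmul ?_).symm
    rw [Finset.pair_comm]
    exact hmul x y hxy

theorem insert_mem_sts_iff (hB3 : ∀ t ∈ B, t.card = 3)
    (hSTS : ∀ x y : V, x ≠ y → (B.filter (fun t => x ∈ t ∧ y ∈ t)).card = 1)
    {mul : V → V → V} (hmul : ∀ x y : V, x ≠ y → ({x, y, mul x y} : Finset V) ∈ B)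
    {a z w : V} : ({a, z, w} : Finset V) ∈ B ↔ z ≠ a ∧ w = mul z a := by
  rw [Finset.insert_comm]
  constructor
  · intro hB
    exact ⟨(ne_of_card_eq_three (hB3 _ hB)).1, eq_mul_of_mem_sts hB3 hSTS hmul hB⟩
  · rintro ⟨hza, rfl⟩
    exact hmul z a hza

end SteinerTripleSystem

namespace ZMod

theorem three_cases (k : ZMod 3) : k = 0 ∨ k = 1 ∨ k = 2 := by
  revert k; decide

theorem eq_or_eq_or_eq_neg_add_of_ne_three {i j : ZMod 3} (hij : i ≠ j) (k : ZMod 3) :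
    k = i ∨ k = j ∨ k = -(i + j) := by
  revert i j k; decide

theorem neg_add_ne_left_of_ne_three {i j : ZMod 3} (hij : i ≠ j) : -(i + j) ≠ i := by
  revert i j; decide

theorem neg_sub_self_three (i : ZMod 3) : -i - i = i := by
  revert i; decide

theorem one_sub_sub_self_three (i : ZMod 3) : 1 - i - i = i + 1 := by
  revert i; decide

theorem one_sub_sub_add_one_three (i : ZMod 3) : 1 - i - (i + 1) = i := by
  revert i; decide

theorem eq_or_eq_add_one_or_eq_add_one_three (i j : ZMod 3) : j = i ∨ j = i + 1 ∨ i = j + 1 := by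
  revert i j; decide

end ZMod

section Bose

variable {Q : Type} [DecidableEq Q] {mul : Q → Q → Q}

def fiberLine (x : Q) : Finset (Q × ZMod 3) := {(x, 0), (x, 1), (x, 2)}

@[simp]
theorem mem_fiberLine {x : Q} {p : Q × ZMod 3} : p ∈ fiberLine x ↔ p.1 = x := by
  obtain ⟨y, j⟩ := p
  rcases ZMod.three_cases j with rfl | rfl | rfl <;> simp +decide [fiberLine]

/-- The third point of the Bose triple through `(x, i) ≠ (y, j)`. For `x ≠ y` its level
`1 - i - j` is `i + 1` when `j = i`, and the lower of `i, j` when these are adjacent. -/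
def boseThird (mul : Q → Q → Q) (p q : Q × ZMod 3) : Q × ZMod 3 :=
  if p.1 = q.1 then (p.1, -(p.2 + q.2)) else (mul p.1 q.1, 1 - p.2 - q.2)

theorem boseThird_comm (hq : IsSteinerQuasigroup mul) (p q : Q × ZMod 3) :
    boseThird mul p q = boseThird mul q p := by
  by_cases h : p.1 = q.1
  · simp [boseThird, h, add_comm]
  · simp [boseThird, h, Ne.symm h, hq.mul_comm p.1, sub_right_comm]

theorem boseThird_ne_left (hq : IsSteinerQuasigroup mul) {p q : Q × ZMod 3} (hpq : p ≠ q) :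
    boseThird mul p q ≠ p := by
  obtain ⟨x, i⟩ := p
  obtain ⟨y, j⟩ := q
  by_cases hxy : x = y
  · subst hxy
    have hij : i ≠ j := fun h => hpq (h ▸ rfl)
    simpa [boseThird] using ZMod.neg_add_ne_left_of_ne_three hij
  · simp [boseThird, hxy, hq.mul_ne_left hxy]

theorem boseThird_ne_right (hq : IsSteinerQuasigroup mul) {p q : Q × ZMod 3} (hpq : p ≠ q) :
    boseThird mul p q ≠ q :=
  boseThird_comm hq p q ▸ boseThird_ne_left hq hpq.symm

theorem boseThird_mem (hq : IsSteinerQuasigroup mul) {t : Finset (Q × ZMod 3)}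
    (ht : BoseTriples mul t) {p q : Q × ZMod 3} (hpt : p ∈ t) (hqt : q ∈ t) (hpq : p ≠ q) :
    boseThird mul p q ∈ t := by
  rcases ht with ⟨u, rfl⟩ | ⟨u, w, k, huw, rfl⟩
  · change p ∈ fiberLine u at hpt
    change q ∈ fiberLine u at hqt
    change _ ∈ fiberLine u
    simp_all [boseThird]
  · have hmu := hq.mul_ne_left huw
    have hmw := hq.mul_ne_right huw
    simp only [Finset.mem_insert, Finset.mem_singleton] at hpt hqt
    rcases hpt with rfl | rfl | rfl <;> rcases hqt with rfl | rfl | rfl <;>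
      simp_all [boseThird, Ne.symm, hq.mul_mul_self_left, hq.mul_mul_self_right,
        hq.mul_comm w, hq.mul_comm _ u, ZMod.one_sub_sub_self_three, ZMod.neg_sub_self_three,
        ZMod.one_sub_sub_add_one_three]

theorem BoseTriples.card_eq_three {t : Finset (Q × ZMod 3)}
    (ht : BoseTriples mul t) : t.card = 3 := by
  rcases ht with ⟨u, rfl⟩ | ⟨u, w, k, huw, rfl⟩
  · rw [Finset.card_eq_three]
    exact ⟨_, _, _, by simp +decide, by simp +decide, by simp +decide, rfl⟩
  · rw [Finset.card_eq_three]
    exact ⟨_, _, _, by simp [huw], by simp, by simp, rfl⟩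

theorem card_insert_boseThird (hq : IsSteinerQuasigroup mul) {p q : Q × ZMod 3} (hpq : p ≠ q) :
    ({p, q, boseThird mul p q} : Finset (Q × ZMod 3)).card = 3 :=
  Finset.card_eq_three.mpr ⟨p, q, _, hpq, (boseThird_ne_left hq hpq).symm,
    (boseThird_ne_right hq hpq).symm, rfl⟩

theorem BoseTriples.eq_insert_boseThird (hq : IsSteinerQuasigroup mul) {t : Finset (Q × ZMod 3)}
    (ht : BoseTriples mul t) {p q : Q × ZMod 3} (hpt : p ∈ t) (hqt : q ∈ t) (hpq : p ≠ q) :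
    t = {p, q, boseThird mul p q} := by
  refine (Finset.eq_of_subset_of_card_le ?_ ?_).symm
  · simp [Finset.insert_subset_iff, hpt, hqt, boseThird_mem hq ht hpt hqt hpq]
  · rw [ht.card_eq_three, card_insert_boseThird hq hpq]

theorem BoseTriples.eq_of_mem_of_mem (hq : IsSteinerQuasigroup mul) {t t' : Finset (Q × ZMod 3)}
    (ht : BoseTriples mul t) (ht' : BoseTriples mul t') {p q : Q × ZMod 3} (hpq : p ≠ q)
    (hpt : p ∈ t) (hqt : q ∈ t) (hpt' : p ∈ t') (hqt' : q ∈ t') : t = t' := by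
  rw [ht.eq_insert_boseThird hq hpt hqt hpq, ht'.eq_insert_boseThird hq hpt' hqt' hpq]

theorem boseTriples_insert_boseThird (hq : IsSteinerQuasigroup mul) {p q : Q × ZMod 3}
    (hpq : p ≠ q) : BoseTriples mul {p, q, boseThird mul p q} := by
  obtain ⟨x, i⟩ := p
  obtain ⟨y, j⟩ := q
  by_cases hxy : x = y
  · subst hxy
    have hij : i ≠ j := fun h => hpq (h ▸ rfl)
    refine Or.inl ⟨x, ?_⟩
    change _ = fiberLine x
    ext ⟨z, k⟩
    simp only [boseThird, if_true, Finset.mem_insert, Finset.mem_singleton, Prod.mk.injEq,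
      mem_fiberLine]
    constructor
    · rintro (⟨rfl, -⟩ | ⟨rfl, -⟩ | ⟨rfl, -⟩) <;> rfl
    · rintro rfl
      simpa using ZMod.eq_or_eq_or_eq_neg_add_of_ne_three hij k
  have adjacent : ∀ {x y : Q} {i : ZMod 3}, x ≠ y →
      BoseTriples mul {(x, i), (y, i + 1), boseThird mul (x, i) (y, i + 1)} := by
    intro x y i hxy
    refine Or.inr ⟨x, mul x y, i, (hq.mul_ne_left hxy).symm, ?_⟩
    simp only [boseThird, if_neg hxy, ZMod.one_sub_sub_add_one_three, hq.mul_mul_self_left]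
    rw [Finset.pair_comm]
  rcases ZMod.eq_or_eq_add_one_or_eq_add_one_three i j with rfl | rfl | rfl
  · refine Or.inr ⟨x, y, j, hxy, ?_⟩
    simp [boseThird, hxy, ZMod.one_sub_sub_self_three]
  · exact adjacent hxy
  · rw [Finset.insert_comm, boseThird_comm hq]
    exact adjacent (Ne.symm hxy)

end Bose

section PartialLinearSpace

variable {P : Type} [Fintype P] [DecidableEq P] {W : Finset P} {L : Finset (Finset P)} {k : ℕ}

theorem card_lines_through_add_card_oppLineIn (hLW : ∀ l ∈ L, l ⊆ W ∧ l.card = k)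
    (hlin : ∀ x y : P, x ∈ W → y ∈ W → x ≠ y → (L.filter (fun l => x ∈ l ∧ y ∈ l)).card ≤ 1)
    {p : P} (hp : p ∈ W) :
    (k - 1) * (L.filter (fun l => p ∈ l)).card + (oppLineIn L W p).card + 1 = W.card := by
  set Lp := L.filter (fun l => p ∈ l)
  have hcollinear : (W.erase p).filter (fun q => ∃ l ∈ L, p ∈ l ∧ q ∈ l) =
      Lp.biUnion (fun l => l.erase p) := by
    ext q
    simp only [Finset.mem_filter, Finset.mem_erase, Finset.mem_biUnion, Lp]
    constructor
    · rintro ⟨⟨hqp, -⟩, l, hl, hpl, hql⟩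
      exact ⟨l, ⟨hl, hpl⟩, hqp, hql⟩
    · rintro ⟨l, ⟨hl, hpl⟩, hqp, hql⟩
      exact ⟨⟨hqp, (hLW l hl).1 hql⟩, l, hl, hpl, hql⟩
  have hopp : (W.erase p).filter (fun q => ¬∃ l ∈ L, p ∈ l ∧ q ∈ l) = oppLineIn L W p := by
    ext q
    simp only [oppLineIn, Finset.mem_filter, Finset.mem_erase, not_exists, not_and]
    tauto
  have hdisj : (Lp : Set (Finset P)).PairwiseDisjoint (fun l => l.erase p) := by
    intro l hl m hm hlm
    refine Finset.disjoint_left.mpr fun q hql hqm => hlm ?_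
    simp only [Finset.mem_coe, Finset.mem_filter, Lp] at hl hm
    have hqp := Finset.ne_of_mem_erase hql
    refine Finset.card_le_one.mp (hlin p q hp ((hLW l hl.1).1 (Finset.mem_of_mem_erase hql))
      hqp.symm) l ?_ m ?_
    · simp [hl.1, hl.2, Finset.mem_of_mem_erase hql]
    · simp [hm.1, hm.2, Finset.mem_of_mem_erase hqm]
  have hcard : (Lp.biUnion fun l => l.erase p).card = (k - 1) * Lp.card := by
    rw [Finset.card_biUnion hdisj, Finset.sum_const_nat, mul_comm]
    intro l hl
    simp only [Finset.mem_filter, Lp] at hl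
    rw [Finset.card_erase_of_mem hl.2, (hLW l hl.1).2]
  rw [← Finset.card_erase_add_one hp,
    ← Finset.card_filter_add_card_filter_not (s := W.erase p) (fun q => ∃ l ∈ L, p ∈ l ∧ q ∈ l),
    hcollinear, hopp, hcard]

end PartialLinearSpace

section Residual

variable {V : Type} [Fintype V] [DecidableEq V] {mul : V → V → V}

def residualPoints (a : V) : Finset (V × ZMod 3) :=
  Finset.univ.filter (fun p => p.1 ≠ a)

noncomputable def residualLines (mul : V → V → V) (a : V) : Finset (Finset (V × ZMod 3)) :=
  Finset.univ.filter (fun t => BoseTriples mul t ∧ ∀ i : ZMod 3, (a, i) ∉ t)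

@[simp]
theorem mem_residualPoints {a : V} {p : V × ZMod 3} : p ∈ residualPoints a ↔ p.1 ≠ a := by
  simp [residualPoints]

@[simp]
theorem mem_residualLines {a : V} {t : Finset (V × ZMod 3)} :
    t ∈ residualLines mul a ↔ BoseTriples mul t ∧ ∀ i : ZMod 3, (a, i) ∉ t := by
  simp [residualLines]

theorem card_residualPoints (a : V) : (residualPoints a).card = 3 * (Fintype.card V - 1) := by
  have h : residualPoints a = (Finset.univ.erase a) ×ˢ (Finset.univ : Finset (ZMod 3)) := by
    ext p
    simp
  rw [h, Finset.card_product, Finset.card_erase_of_mem (Finset.mem_univ a), Finset.card_univ,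
    Finset.card_univ, ZMod.card, mul_comm]

theorem fiberLine_mem_residualLines {a x : V} (hxa : x ≠ a) :
    fiberLine x ∈ residualLines mul a :=
  mem_residualLines.mpr ⟨Or.inl ⟨x, rfl⟩, fun _ h => hxa (mem_fiberLine.mp h).symm⟩

theorem subset_residualPoints_of_mem_residualLines {a : V} {l : Finset (V × ZMod 3)}
    (hl : l ∈ residualLines mul a) : l ⊆ residualPoints a := by
  intro p hp
  rw [mem_residualPoints]
  rintro rfl
  exact (mem_residualLines.mp hl).2 p.2 hp

/-- A line through `(x, i)` and `(x * a, j)` would have its third point over `x * (x * a) = a`. -/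
theorem mul_notMem_of_mem_residualLines (hq : IsSteinerQuasigroup mul) {a x : V} {i : ZMod 3}
    {l : Finset (V × ZMod 3)} (hl : l ∈ residualLines mul a) (hxl : (x, i) ∈ l) (j : ZMod 3) :
    (mul x a, j) ∉ l := by
  intro hbl
  obtain ⟨hBose, havoid⟩ := mem_residualLines.mp hl
  have hxa : x ≠ a := by rintro rfl; exact havoid i hxl
  have hxb : x ≠ mul x a := (hq.mul_ne_left hxa).symm
  have hthird := boseThird_mem hq hBose hxl hbl (fun h => hxb (congrArg Prod.fst h))
  simp only [boseThird, if_neg hxb, hq.mul_mul_self_left] at hthird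
  exact havoid _ hthird

theorem oppLineIn_residual (hq : IsSteinerQuasigroup mul) {a x : V} (hxa : x ≠ a) (i : ZMod 3) :
    oppLineIn (residualLines mul a) (residualPoints a) (x, i) = fiberLine (mul x a) := by
  ext ⟨y, j⟩
  simp only [oppLineIn, Finset.mem_filter, mem_residualPoints, mem_fiberLine]
  constructor
  · rintro ⟨hya, hne, hnone⟩
    by_contra hyb
    have hxy : (x, i) ≠ (y, j) := Ne.symm hne
    refine hnone _ (mem_residualLines.mpr ⟨boseTriples_insert_boseThird hq hxy, ?_⟩)
      ⟨by simp, by simp⟩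
    intro k hk
    simp only [Finset.mem_insert, Finset.mem_singleton, boseThird, Prod.ext_iff] at hk
    rcases hk with ⟨h, -⟩ | ⟨h, -⟩ | hk
    · exact hxa h.symm
    · exact hya h.symm
    · split_ifs at hk
      · exact hxa hk.1.symm
      · exact hyb (by rw [hk.1, hq.mul_mul_self_left])
  · rintro rfl
    refine ⟨hq.mul_ne_right hxa, fun h => hq.mul_ne_left hxa (congrArg Prod.fst h),
      fun l hl ⟨hxl, hbl⟩ => mul_notMem_of_mem_residualLines hq hl hxl j hbl⟩

theorem isPentOn_residual (hq : IsSteinerQuasigroup mul) (a : V) {r : ℕ}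
    (hr : 2 * r + 7 = 3 * Fintype.card V) :
    IsPentOn (residualPoints a) 3 r (residualLines mul a) := by
  have hlines : ∀ l ∈ residualLines mul a, l ⊆ residualPoints a ∧ l.card = 3 := fun l hl =>
    ⟨subset_residualPoints_of_mem_residualLines hl, (mem_residualLines.mp hl).1.card_eq_three⟩
  have hlinear : ∀ p q : V × ZMod 3, p ∈ residualPoints a → q ∈ residualPoints a → p ≠ q →
      ((residualLines mul a).filter (fun l => p ∈ l ∧ q ∈ l)).card ≤ 1 := by
    refine fun p q _ _ hpq => Finset.card_le_one.mpr fun l hl m hm => ?_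
    simp only [Finset.mem_filter, mem_residualLines] at hl hm
    exact hl.1.1.eq_of_mem_of_mem hq hm.1.1 hpq hl.2.1 hl.2.2 hm.2.1 hm.2.2
  have hopp : ∀ p ∈ residualPoints a,
      oppLineIn (residualLines mul a) (residualPoints a) p ∈ residualLines mul a := by
    rintro ⟨x, i⟩ hp
    have hxa : x ≠ a := mem_residualPoints.mp hp
    rw [oppLineIn_residual hq hxa]
    exact fiberLine_mem_residualLines (hq.mul_ne_right hxa)
  refine ⟨hlines, hlinear, fun p hp => ?_, hopp⟩
  have hcount := card_lines_through_add_card_oppLineIn hlines hlinear hp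
  have hV : 0 < Fintype.card V := Fintype.card_pos_iff.mpr ⟨p.1⟩
  rw [(hlines _ (hopp p hp)).2, card_residualPoints] at hcount
  omega

theorem oppPairIn_residual_iff (hq : IsSteinerQuasigroup mul) (a : V)
    (l m : Finset (V × ZMod 3)) :
    OppPairIn (residualLines mul a) (residualPoints a) l m ↔
      ∃ z, z ≠ a ∧ l = fiberLine z ∧ m = fiberLine (mul z a) := by
  constructor
  · rintro ⟨hl, -, -, hoppl, hoppm⟩
    obtain ⟨⟨x, i⟩, hxl⟩ : l.Nonempty := by
      rw [← Finset.card_pos, (mem_residualLines.mp hl).1.card_eq_three]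
      norm_num
    have hxa : x ≠ a := mem_residualPoints.mp (subset_residualPoints_of_mem_residualLines hl hxl)
    have hm : m = fiberLine (mul x a) := by rw [← hoppl _ hxl, oppLineIn_residual hq hxa]
    have hbm : (mul x a, 0) ∈ m := by simp [hm]
    refine ⟨x, hxa, ?_, hm⟩
    rw [← hoppm _ hbm, oppLineIn_residual hq (hq.mul_ne_right hxa), hq.mul_mul_self_right]
  · rintro ⟨z, hza, rfl, rfl⟩
    have hwa : mul z a ≠ a := hq.mul_ne_right hza
    refine ⟨fiberLine_mem_residualLines hza, fiberLine_mem_residualLines hwa, ?_, ?_, ?_⟩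
    · intro h
      have : (z, 0) ∈ fiberLine (mul z a) := h ▸ by simp
      exact hq.mul_ne_left hza (mem_fiberLine.mp this).symm
    · rintro ⟨x, i⟩ hx
      obtain rfl : x = z := mem_fiberLine.mp hx
      exact oppLineIn_residual hq hza i
    · rintro ⟨x, i⟩ hx
      obtain rfl : x = mul z a := mem_fiberLine.mp hx
      rw [oppLineIn_residual hq hwa, hq.mul_mul_self_right]

end Residual

theorem stmt15_general (V : Type) [Fintype V] [DecidableEq V] (v s : ℕ)
    (hv : Fintype.card V = v) (hvs : v = 6 * s + 1 ∨ v = 6 * s + 3)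
    (B : Finset (Finset V))
    (hB3 : ∀ t ∈ B, t.card = 3)
    (hSTS : ∀ x y : V, x ≠ y → (B.filter (fun t => x ∈ t ∧ y ∈ t)).card = 1)
    (mul : V → V → V)
    (hidem : ∀ x : V, mul x x = x)
    (hmul : ∀ x y : V, x ≠ y → ({x, y, mul x y} : Finset V) ∈ B)
    (a : V) (r : ℕ) (hr : 2 * r + 7 = 3 * v)
    (W : Finset (V × ZMod 3)) (hW : W = Finset.univ.filter (fun p => p.1 ≠ a))
    (L : Finset (Finset (V × ZMod 3)))
    (hL : L = Finset.univ.filter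
      (fun t => BoseTriples mul t ∧ ∀ i : ZMod 3, (a, i) ∉ t)) :
    IsPentOn W 3 r L ∧
    (v = 6 * s + 1 → r + 2 = 9 * s) ∧
    (v = 6 * s + 3 → r = 9 * s + 1) ∧
    (∀ l m : Finset (V × ZMod 3), OppPairIn L W l m ↔
      ∃ z w : V, z ≠ w ∧ ({a, z, w} : Finset V) ∈ B ∧
        l = {(z, 0), (z, 1), (z, 2)} ∧ m = {(w, 0), (w, 1), (w, 2)}) := by
  subst hv hW hL
  have hq := isSteinerQuasigroup_of_sts hB3 hSTS hidem hmul
  refine ⟨isPentOn_residual hq a hr, by omega, by omega, fun l m => ?_⟩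
  refine (oppPairIn_residual_iff hq a l m).trans ⟨?_, ?_⟩
  · rintro ⟨z, hza, rfl, rfl⟩
    exact ⟨z, mul z a, (hq.mul_ne_left hza).symm,
      (insert_mem_sts_iff hB3 hSTS hmul).mpr ⟨hza, rfl⟩, rfl, rfl⟩
  · rintro ⟨z, w, -, hB, rfl, rfl⟩
    obtain ⟨hza, rfl⟩ := (insert_mem_sts_iff hB3 hSTS hmul).mp hB
    exact ⟨z, hza, rfl, rfl⟩

/-- Given a Steiner triple system (V,B) of order v = 6s+1 or 6s+3 (s ≥ 1)
with its Steiner quasigroup, apply the Bose construction on V × Z₃ and delete the three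
points (a,0), (a,1), (a,2) (for a fixed a ∈ V) together with all triples meeting them.
The result is a pentagonal geometry PENT(3,r) with 2r + 7 = 3v, i.e. r = 9s-2 if
v ≡ 1 (mod 6) and r = 9s+1 if v ≡ 3 (mod 6), whose opposite line pairs are exactly the
pairs {(z,0),(z,1),(z,2)}, {(w,0),(w,1),(w,2)} with {a,z,w} ∈ B. -/
theorem stmt15 (V : Type) [Fintype V] [DecidableEq V] (v s : ℕ)
    (hv : Fintype.card V = v) (hs : 1 ≤ s) (hvs : v = 6 * s + 1 ∨ v = 6 * s + 3)
    (B : Finset (Finset V))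
    (hB3 : ∀ t ∈ B, t.card = 3)
    (hSTS : ∀ x y : V, x ≠ y → (B.filter (fun t => x ∈ t ∧ y ∈ t)).card = 1)
    (mul : V → V → V)
    (hidem : ∀ x : V, mul x x = x)
    (hmul : ∀ x y : V, x ≠ y → ({x, y, mul x y} : Finset V) ∈ B)
    (a : V) (r : ℕ) (hr : 2 * r + 7 = 3 * v)
    (W : Finset (V × ZMod 3)) (hW : W = Finset.univ.filter (fun p => p.1 ≠ a))
    (L : Finset (Finset (V × ZMod 3)))
    (hL : L = Finset.univ.filter
      (fun t => BoseTriples mul t ∧ ∀ i : ZMod 3, (a, i) ∉ t)) :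
    IsPentOn W 3 r L ∧
    (v = 6 * s + 1 → r + 2 = 9 * s) ∧
    (v = 6 * s + 3 → r = 9 * s + 1) ∧
    (∀ l m : Finset (V × ZMod 3), OppPairIn L W l m ↔
      ∃ z w : V, z ≠ w ∧ ({a, z, w} : Finset V) ∈ B ∧
        l = {(z, 0), (z, 1), (z, 2)} ∧ m = {(w, 0), (w, 1), (w, 2)}) :=
  stmt15_general V v s hv hvs B hB3 hSTS mul hidem hmul a r hr W hW L hL
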